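/- Let n be a positive integer, m coprime to n with m* its inverse mod n, and t a positive integer with t ≡ m − m* (mod n). Then for every integer l ≥ 1, setting t₁ = t + l·n, we have S(1 + m·t₁, n·t₁) = 2/(n·t₁) + t₁/n − 3. -/

import Mathlib

/-!
Write `t` for `t₁`, `h = 1 + m t` and `k = n t`. As `h` is prime to `k`, `j ↦ h j mod k` permutes
the residues mod `k`, and `s(h, k) = k⁻² ∑_{j<k} j (h j mod k) - (k - 1)/4`. Split `j = n i + u`
with `u < n`, `i < t`, and put `r = m u mod n`. The hypotheses give `h ≡ m² (mod n)`, hence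
`u + t r = n c + w` with `w = m r mod n`, and on the residue class of `u` the map is a cyclic
shift: `h (n i + u) mod k = n ((i + c) mod t) + w`. Summing over `i` gives a quadratic in `c`.
Once `n c = u + t r - w` is substituted, the sum over `u` is a polynomial in `u`, `r` and `w`,
and the permutation `u ↦ m u mod n`, which sends `(u, r)` to `(r, w)`, reduces it to `∑ u`
and `∑ u²`.
-/

open scoped Classical
open Finset

/-- The sawtooth function `((x))`. -/
noncomputable def saw (x : ℝ) : ℝ :=
  if ∃ z : ℤ, (z : ℝ) = x then 0 else x - ⌊x⌋ - 1/2

/-- The classical Dedekind sum `s(m,n)`. -/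
noncomputable def ded (m n : ℤ) : ℝ :=
  ∑ k ∈ Finset.Icc (1 : ℤ) n, saw ((k : ℝ) / n) * saw ((m : ℝ) * k / n)

/-- The normalized Dedekind sum `S(m,n) = 12 s(m,n)`. -/
noncomputable def Sded (m n : ℤ) : ℝ := 12 * ded m n

theorem two_mul_sum_range_natCast (n : ℕ) : 2 * ∑ i ∈ range n, (i : ℤ) = n * (n - 1) := by
  induction n with
  | zero => simp
  | succ n ih => rw [sum_range_succ, mul_add, ih]; push_cast; ring

theorem six_mul_sum_range_natCast_sq (n : ℕ) :
    6 * ∑ i ∈ range n, (i : ℤ) ^ 2 = n * (n - 1) * (2 * n - 1) := by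
  induction n with
  | zero => simp
  | succ n ih => rw [sum_range_succ, mul_add, ih]; push_cast; ring

theorem sum_range_mul_eq_sum_range_sum_range {M : Type*} [AddCommMonoid M] (f : ℕ → M)
    (n t : ℕ) : ∑ j ∈ range (n * t), f j = ∑ u ∈ range n, ∑ i ∈ range t, f (n * i + u) := by
  induction t with
  | zero => simp
  | succ t ih => simp only [Nat.mul_succ, sum_range_add, ih, sum_range_succ, sum_add_distrib]

theorem isCoprime_of_mul_modEq_one {a b n : ℤ} (h : a * b ≡ 1 [ZMOD n]) : IsCoprime a n := by
  obtain ⟨c, hc⟩ := h.dvd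
  exact ⟨b, c, by linear_combination -hc⟩

theorem emod_mul_emod_of_mul_modEq_one {x y : ℤ} {n : ℕ} (hxy : x * y ≡ 1 [ZMOD n]) {u : ℕ}
    (hu : u < n) : x * (y * u % n) % n = u := by
  have : x * (y * u % n) ≡ u [ZMOD n] :=
    calc x * (y * u % n) ≡ x * (y * u) [ZMOD n] := (Int.mod_modEq _ _).mul_left x
      _ = x * y * u := by ring
      _ ≡ 1 * u [ZMOD n] := hxy.mul_right _
      _ = u := one_mul _
  rw [this, Int.emod_eq_of_lt (by positivity) (by exact_mod_cast hu)]

theorem sum_range_emod_mul {M : Type*} [AddCommMonoid M] {a : ℤ} {n : ℕ} (ha : IsCoprime a n)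
    (f : ℤ → M) : ∑ u ∈ range n, f (a * u % n) = ∑ u ∈ range n, f u := by
  rcases n.eq_zero_or_pos with rfl | hn
  · simp
  have hn' : (0 : ℤ) < n := by exact_mod_cast hn
  obtain ⟨b, c, hbc⟩ := ha
  have hba : b * a ≡ 1 [ZMOD n] := Int.modEq_iff_dvd.mpr ⟨c, by linear_combination -hbc⟩
  have hab : a * b ≡ 1 [ZMOD n] := by rwa [mul_comm]
  have hmem (x : ℤ) (u : ℕ) : (x * u % n).toNat ∈ range n := by
    have := Int.emod_lt_of_pos (x * u) hn'
    simp only [mem_range]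
    omega
  refine sum_nbij' (fun u => (a * u % n).toNat) (fun v => (b * v % n).toNat)
    (fun u _ => hmem a u) (fun v _ => hmem b v) (fun u hu => ?_) (fun v hv => ?_) (fun u _ => ?_)
  · simp only [Int.toNat_of_nonneg (Int.emod_nonneg _ hn'.ne'),
      emod_mul_emod_of_mul_modEq_one hba (mem_range.mp hu), Int.toNat_natCast]
  · simp only [Int.toNat_of_nonneg (Int.emod_nonneg _ hn'.ne'),
      emod_mul_emod_of_mul_modEq_one hab (mem_range.mp hv), Int.toNat_natCast]
  · simp [Int.emod_nonneg _ hn'.ne']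

theorem saw_intCast (z : ℤ) : saw z = 0 := if_pos ⟨z, rfl⟩

theorem saw_intCast_div_natCast {a : ℤ} {k : ℕ} (hk : 0 < k) (ha : ¬ (k : ℤ) ∣ a) :
    saw (a / k) = (a % k : ℤ) / k - 1 / 2 := by
  have hk' : (k : ℝ) ≠ 0 := by positivity
  rw [saw, if_neg, Int.self_sub_floor, Int.fract_div_intCast_eq_div_intCast_mod]
  rintro ⟨z, hz⟩
  exact ha ⟨z, by rw [eq_div_iff hk'] at hz; exact_mod_cast hz.symm.trans (mul_comm _ _)⟩

theorem ded_natCast_eq_sum_range (h : ℤ) {k : ℕ} (hk : 0 < k) :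
    ded h k = ∑ j ∈ range k, saw (j / k) * saw (h * j / k) := by
  set F : ℕ → ℝ := fun j => saw (j / k) * saw (h * j / k)
  have hF0 : F 0 = 0 := by simpa [F] using saw_intCast 0
  have hFk : F k = 0 := by
    simp only [F, mul_div_cancel_right₀ _ (show (k : ℝ) ≠ 0 by positivity), saw_intCast, mul_zero]
  have hshift := sum_range_succ' F k
  rw [sum_range_succ, hFk, hF0, add_zero, add_zero] at hshift
  rw [hshift, ded, Int.Icc_eq_finset_map, sum_map]
  simp [F, add_comm]

theorem ded_eq_sum_mul_emod {h : ℤ} {k : ℕ} (hk : 0 < k) (hh : IsCoprime h k) :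
    ded h k = ((∑ j ∈ range k, j * (h * j % k) : ℤ) : ℝ) / k ^ 2 - (k - 1) / 4 := by
  have hk' : (k : ℝ) ≠ 0 := by positivity
  -- `G j` expands `(j/k - 1/2) ((h j % k)/k - 1/2)`: the `j`-th term for `0 < j < k`,
  -- but `1/4` instead of `0` at `j = 0`
  set G : ℕ → ℝ := fun j => ((j * (h * j % k) : ℤ) : ℝ) / k ^ 2 - j / (2 * k) -
    ((h * j % k : ℤ) : ℝ) / (2 * k) + 1 / 4
  have hterm : ∀ j ∈ (range k).erase 0, saw (j / k) * saw (h * j / k) = G j := by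
    intro j hj
    obtain ⟨hj0, hjk⟩ : j ≠ 0 ∧ j < k := by simpa using hj
    have hj : ¬ (k : ℤ) ∣ j := fun hd => hj0 (Nat.eq_zero_of_dvd_of_lt (by exact_mod_cast hd) hjk)
    have hhj : ¬ (k : ℤ) ∣ h * j := fun hd => hj (hh.symm.dvd_of_dvd_mul_left hd)
    have e1 := saw_intCast_div_natCast hk hj
    have e2 := saw_intCast_div_natCast hk hhj
    rw [Int.emod_eq_of_lt (by positivity) (by exact_mod_cast hjk)] at e1
    simp only [G]
    push_cast at e1 e2 ⊢
    rw [e1, e2]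
    field_simp
    ring
  have hsum : ∑ j ∈ range k, saw (j / k) * saw (h * j / k) = ∑ j ∈ range k, G j - 1 / 4 := by
    rw [← add_sum_erase _ _ (mem_range.mpr hk), ← add_sum_erase _ G (mem_range.mpr hk),
      sum_congr rfl hterm]
    simp [G, show saw 0 = 0 by simpa using saw_intCast 0]
  have hperm : ∑ j ∈ range k, ((h * j % k : ℤ) : ℝ) = ∑ j ∈ range k, ((j : ℤ) : ℝ) :=
    sum_range_emod_mul hh (fun v => (v : ℝ))
  have hgauss : 2 * ∑ j ∈ range k, (j : ℝ) = k * (k - 1) := by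
    have := congrArg (Int.cast : ℤ → ℝ) (two_mul_sum_range_natCast k)
    push_cast at this
    exact this
  rw [ded_natCast_eq_sum_range h hk, hsum]
  simp only [G, sum_add_distrib, sum_sub_distrib, ← sum_div, sum_const, card_range, hperm,
    nsmul_eq_mul, mul_one]
  push_cast
  field_simp
  linear_combination (-4 * (k : ℝ)) * hgauss

theorem six_mul_sum_range_mul_emod_add {t : ℕ} {c : ℤ} (hc : 0 ≤ c) (hct : c ≤ t) (a b : ℤ) :
    6 * ∑ i ∈ range t, (a * i + b) * ((i + c) % t) =
      a * (t * (t - 1) * (2 * t - 1) - 3 * t * c * (t - c)) + 3 * b * t * (t - 1) := by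
  lift c to ℕ using hc
  obtain ⟨s, rfl⟩ := Nat.exists_eq_add_of_le' (show c ≤ t by exact_mod_cast hct)
  have hlow : ∀ i ∈ range s, (a * i + b) * ((i + c) % ↑(s + c)) =
      a * i ^ 2 + (a * c + b) * i + b * c := by
    intro i hi
    rw [Int.emod_eq_of_lt (by positivity) (by have := mem_range.mp hi; push_cast; omega)]
    ring
  have hhigh : ∀ j ∈ range c, (a * ↑(s + j) + b) * ((↑(s + j) + c) % ↑(s + c)) =
      a * j ^ 2 + (a * s + b) * j := by
    intro j hj
    rw [show ((s + j : ℕ) : ℤ) + c = j + 1 * ↑(s + c) by push_cast; ring,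
      Int.add_mul_emod_self_right,
      Int.emod_eq_of_lt (by positivity) (by have := mem_range.mp hj; push_cast; omega)]
    push_cast
    ring
  rw [sum_range_add, sum_congr rfl hlow, sum_congr rfl hhigh]
  simp only [sum_add_distrib, ← mul_sum, sum_const, card_range, nsmul_eq_mul]
  push_cast
  linear_combination 3 * (a * c + b) * two_mul_sum_range_natCast s +
    a * six_mul_sum_range_natCast_sq s + 3 * (a * s + b) * two_mul_sum_range_natCast c +
    a * six_mul_sum_range_natCast_sq c

theorem one_add_mul_mul_emod (m : ℤ) {n t : ℕ} (hn : 0 < n) (ht : 0 < t) {u c w : ℤ}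
    (hcw : u + t * (m * u % n) = n * c + w) (hw0 : 0 ≤ w) (hwn : w < n) (i : ℤ) :
    (1 + m * t) * (n * i + u) % (n * t) = n * ((i + c) % t) + w := by
  have ht' : (0 : ℤ) < t := by exact_mod_cast ht
  refine ((Int.ediv_emod_unique (q := m * i + m * u / n + (i + c) / t)
    (by positivity)).mpr ⟨?_, ?_, ?_⟩).2
  · linear_combination (t : ℤ) * Int.mul_ediv_add_emod (m * u) n - hcw +
      (n : ℤ) * Int.mul_ediv_add_emod (i + c) t
  · exact add_nonneg (mul_nonneg (by positivity) (Int.emod_nonneg _ ht'.ne')) hw0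
  · have := Int.emod_lt_of_pos (i + c) ht'
    nlinarith

theorem six_mul_sum_residue_class (m : ℤ) {n t u : ℕ} (hn : 0 < n) (ht : 0 < t) (hu : u < n)
    {c w : ℤ} (hcw : u + t * (m * u % n) = n * c + w) (hw0 : 0 ≤ w) (hwn : w < n) :
    6 * ∑ i ∈ range t, ((n * i + u : ℕ) : ℤ) * ((1 + m * t) * (n * i + u : ℕ) % (n * t)) =
      n ^ 2 * (t * (t - 1) * (2 * t - 1) - 3 * t * c * (t - c)) +
        3 * n * t * (t - 1) * (u + w) + 6 * t * u * w := by
  have hr := Int.emod_nonneg (m * u) (show (n : ℤ) ≠ 0 by positivity)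
  have hrn := Int.emod_lt_of_pos (m * u) (show (0 : ℤ) < n by positivity)
  have hc : 0 ≤ c := by nlinarith
  have hct : c ≤ t := by nlinarith
  have hshift : ∀ i ∈ range t,
      ((n * i + u : ℕ) : ℤ) * ((1 + m * t) * (n * i + u : ℕ) % (n * t)) =
        n * ((n * i + u) * ((i + c) % t)) + w * (n * i + u) := by
    intro i _
    push_cast
    rw [one_add_mul_mul_emod m hn ht hcw hw0 hwn]
    ring
  rw [sum_congr rfl hshift, sum_add_distrib, ← mul_sum, ← mul_sum, sum_add_distrib, ← mul_sum,
    sum_const, card_range, nsmul_eq_mul]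
  linear_combination (n : ℤ) * six_mul_sum_range_mul_emod_add hc hct n u +
    3 * n * w * two_mul_sum_range_natCast t

theorem twelve_mul_sq_sum_residue_class {m : ℤ} {n t u : ℕ} (hn : 0 < n) (ht : 0 < t)
    (hu : u < n) (hmt : 1 + m * t ≡ m * m [ZMOD n]) {r w : ℤ} (hr : m * u % n = r)
    (hw : m * r % n = w) :
    12 * n ^ 2 * ∑ i ∈ range t, ((n * i + u : ℕ) : ℤ) * ((1 + m * t) * (n * i + u : ℕ) % (n * t)) =
      2 * n ^ 4 * t * (t - 1) * (2 * t - 1) + 6 * n ^ 2 * t *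
        ((u ^ 2 - n * u) + t ^ 2 * (r ^ 2 - n * r) + (w ^ 2 - n * w) + 2 * n * t * w +
          2 * t * (u * r - r * w)) := by
  have hr' : r ≡ m * u [ZMOD n] := by rw [← hr]; exact Int.mod_modEq _ _
  have hqw : (u + t * r) % n = w := by
    rw [← hw]
    calc (u + t * r : ℤ) ≡ u + t * (m * u) [ZMOD n] := (hr'.mul_left _).add_left _
      _ = (1 + m * t) * u := by ring
      _ ≡ m * m * u [ZMOD n] := hmt.mul_right _
      _ = m * (m * u) := by ring
      _ ≡ m * r [ZMOD n] := (hr'.mul_left _).symm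
  obtain ⟨c, hcw⟩ : ∃ c : ℤ, u + t * r = n * c + w :=
    ⟨(u + t * r) / n, by rw [← hqw, Int.mul_ediv_add_emod]⟩
  have hn' : (0 : ℤ) < n := by exact_mod_cast hn
  have hsum := six_mul_sum_residue_class m hn ht hu (by rwa [hr]) (hqw ▸ Int.emod_nonneg _ hn'.ne')
    (hqw ▸ Int.emod_lt_of_pos _ hn')
  linear_combination 2 * (n : ℤ) ^ 2 * hsum -
    6 * (n : ℤ) ^ 2 * t * (n * c + (u + t * r - w) - n * t) * hcw

theorem twelve_mul_sum_mul_emod {m : ℤ} {n t : ℕ} (hn : 0 < n) (ht : 0 < t) (hm : IsCoprime m n)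
    (hmt : 1 + m * t ≡ m * m [ZMOD n]) :
    12 * ∑ j ∈ range (n * t), (j : ℤ) * ((1 + m * t) * j % (n * t)) =
      2 * n * t + n * t ^ 3 + 3 * (n * t) ^ 3 - 6 * (n * t) ^ 2 := by
  have hperm := fun f : ℤ → ℤ => sum_range_emod_mul hm f
  refine mul_left_cancel₀ (pow_ne_zero 2 (show (n : ℤ) ≠ 0 by positivity)) ?_
  rw [← mul_assoc, mul_comm _ (12 : ℤ), sum_range_mul_eq_sum_range_sum_range, mul_sum,
    sum_congr rfl fun u hu => twelve_mul_sq_sum_residue_class hn ht (mem_range.mp hu) hmt rfl rfl]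
  simp only [sum_add_distrib, sum_sub_distrib, ← mul_sum, sum_const, card_range, nsmul_eq_mul]
  -- `u ↦ m u % n` turns `w`-sums into `r`-sums, `∑ r w` into `∑ u r`, and `r`-sums into `u`-sums
  rw [hperm (fun v => (m * v % n) ^ 2), hperm (fun v => m * v % n),
    hperm (fun v => v * (m * v % n)), hperm (fun v => v ^ 2), hperm (fun v => v)]
  linear_combination (3 * (n : ℤ) ^ 3 * t * (2 * t - 2 - t ^ 2)) * two_mul_sum_range_natCast n +
    ((n : ℤ) ^ 2 * t * (2 + t ^ 2)) * six_mul_sum_range_natCast_sq n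

theorem Sded_one_add_mul_mul {m m' : ℤ} {n t : ℕ} (hn : 0 < n) (ht : 0 < t)
    (hinv : m * m' ≡ 1 [ZMOD n]) (htm : (t : ℤ) ≡ m - m' [ZMOD n]) :
    Sded (1 + m * t) (n * t) = 2 / (n * t) + t / n - 3 := by
  have hmt : 1 + m * t ≡ m * m [ZMOD n] := calc
    1 + m * t ≡ 1 + m * (m - m') [ZMOD n] := (htm.mul_left m).add_left 1
    _ = m * m + (1 - m * m') := by ring
    _ ≡ m * m + (1 - 1) [ZMOD n] := ((Int.ModEq.refl 1).sub hinv).add_left _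
    _ = m * m := by ring
  have hh : IsCoprime (1 + m * t) (n * t) := by
    refine IsCoprime.mul_right (isCoprime_of_mul_modEq_one (b := m' * m') ?_) ⟨1, -m, by ring⟩
    calc (1 + m * t) * (m' * m') ≡ m * m * (m' * m') [ZMOD n] := hmt.mul_right _
      _ = (m * m') * (m * m') := by ring
      _ ≡ 1 * 1 [ZMOD n] := hinv.mul hinv
      _ = 1 := by ring
  have hded := ded_eq_sum_mul_emod (k := n * t) (by positivity) (by exact_mod_cast hh)
  have hsum := congrArg (Int.cast : ℤ → ℝ)
    (twelve_mul_sum_mul_emod hn ht (isCoprime_of_mul_modEq_one hinv) hmt)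
  push_cast at hded hsum
  rw [Sded, hded]
  field_simp
  linear_combination 4 * hsum

theorem vary_t_general (n m mstar t : ℤ) (hn : 0 < n)
    (hinv : m * mstar ≡ 1 [ZMOD n]) (ht : 0 < t) (htc : t ≡ m - mstar [ZMOD n]) :
    ∀ l : ℤ, 1 ≤ l →
      Sded (1 + m * (t + l * n)) (n * (t + l * n)) =
        2 / ((n : ℝ) * (t + l * n)) + ((t : ℝ) + l * n) / n - 3 := by
  intro l hl
  lift n to ℕ using hn.le
  have hpos : 0 < t + l * n := by nlinarith
  obtain ⟨s, hs⟩ : ∃ s : ℕ, (s : ℤ) = t + l * n := ⟨_, Int.toNat_of_nonneg hpos.le⟩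
  have hsR : (t : ℝ) + l * (n : ℤ) = (s : ℤ) := by rw [hs]; push_cast; ring
  have hsn : (s : ℤ) ≡ m - mstar [ZMOD n] := hs ▸ (Int.add_mul_emod_self_right t l n).trans htc
  rw [← hs, hsR]
  simpa using Sded_one_add_mul_mul (by exact_mod_cast hn) (by omega) hinv hsn

theorem vary_t (n m mstar t : ℤ) (hn : 0 < n) (hm : Int.gcd m n = 1)
    (hinv : m * mstar ≡ 1 [ZMOD n]) (ht : 0 < t) (htc : t ≡ m - mstar [ZMOD n]) :
    ∀ l : ℤ, 1 ≤ l →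
      Sded (1 + m * (t + l * n)) (n * (t + l * n)) =
        2 / ((n : ℝ) * (t + l * n)) + ((t : ℝ) + l * n) / n - 3 :=
  vary_t_general n m mstar t hn hinv ht htc
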